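/- arXiv:0707.4184 — 3 statements merged into one kernel-verified Lean document; each statement's English description precedes it below -/
import Mathlib

section
/- Let P be a finite p-group, let Q < P be a proper subgroup of P, and let ψ ∈ Irr(P). Suppose the restriction ψ_Q decomposes as ψ_Q = Σ_{i=1}^{k} n_i φ_i, where φ_1, ..., φ_k are pairwise distinct irreducible characters of Q and n_i = (ψ_Q, φ_i) > 0 for each i = 1, ..., k. Then there exists a finite p-group G with irreducible characters Ψ, Θ ∈ Irr(G) such that ΨΘ = Σ_{i=1}^{k} n_i Φ_i, where Φ_1, ..., Φ_k are pairwise distinct irreducible characters of G and n_i = (ΨΘ, Φ_i) > 0 for each i = 1, ..., k. -/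
/-- `χ : G → ℂ` is a (complex) character of `G`: the trace function of some
finite-dimensional complex representation of `G`. -/
def IsChar (G : Type*) [Group G] (χ : G → ℂ) : Prop :=
  ∃ (n : ℕ) (ρ : Representation ℂ G (Fin n → ℂ)),
    ∀ g : G, χ g = LinearMap.trace ℂ (Fin n → ℂ) (ρ g)

/-- The usual inner product of class functions on a finite group. -/
noncomputable def cInner (G : Type*) [Group G] [Finite G] (χ φ : G → ℂ) : ℂ :=
  (Nat.card G : ℂ)⁻¹ * ∑ᶠ g : G, χ g * (starRingEnd ℂ) (φ g)

/-- `χ` is an irreducible character of the finite group `G`. -/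
def IsIrrChar (G : Type*) [Group G] [Finite G] (χ : G → ℂ) : Prop :=
  IsChar G χ ∧ cInner G χ χ = 1

open scoped Classical in
/-- The induced character `χ^G` of a character `χ` of a subgroup `H ≤ G`. -/
noncomputable def inducedChar {G : Type*} [Group G] [Finite G]
    (H : Subgroup G) (χ : ↥H → ℂ) : G → ℂ :=
  fun g => (Nat.card H : ℂ)⁻¹ *
    ∑ᶠ x : G, if h : x⁻¹ * g * x ∈ H then χ ⟨x⁻¹ * g * x, h⟩ else 0

/-!
Take `G = C_p ≀ P`, the semidirect product `N ⋊ P` with `N = (C_p)^(P ⧸ Q)` permuted through the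
action of `P` on `P ⧸ Q`; it is again a `p`-group. Let `λ` be the linear character of `N` reading
off the coordinate at the trivial coset, and for a class function `α` of `Q` let `α^G` be the
class function induced from `λ ⊗ α` on `N ⋊ Q`. The `P`-conjugates of `λ` are pairwise distinct,
so orthogonality of the characters of `N` makes `α ↦ α^G` an injective isometry: it sends
irreducible characters to irreducible ones and distinct ones to distinct ones. Take `Ψ` the
inflation of `ψ`, `Θ = 1^G` and `Φ i = (φ i)^G`; the projection formula `Ψ · 1^G = (ψ_Q)^G` turns
the decomposition of `ψ_Q` into that of `ΨΘ`.
-/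

open ComplexConjugate

section Characters

variable {G : Type*} [Group G]

lemma isChar_trace {V : Type*} [AddCommGroup V] [Module ℂ V] [FiniteDimensional ℂ V]
    (ρ : Representation ℂ G V) : IsChar G fun g => LinearMap.trace ℂ V (ρ g) :=
  let e := (Module.finBasis ℂ V).equivFun
  ⟨_, (e.conjAlgEquiv ℂ).toMonoidHom.comp ρ, fun g => (LinearMap.trace_conj' (ρ g) e).symm⟩

lemma IsChar.comp {H : Type*} [Group H] {χ : H → ℂ} (hχ : IsChar H χ) (f : G →* H) :
    IsChar G (χ ∘ f) :=
  let ⟨n, ρ, hρ⟩ := hχ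
  ⟨n, ρ.comp f, fun g => hρ (f g)⟩

lemma IsChar.apply_conj {χ : G → ℂ} (hχ : IsChar G χ) (y g : G) : χ (y⁻¹ * g * y) = χ g := by
  obtain ⟨n, ρ, hρ⟩ := hχ
  rw [hρ, hρ, map_mul ρ, map_mul ρ, LinearMap.trace_mul_comm, ← mul_assoc, ← map_mul ρ,
    mul_inv_cancel, map_one, one_mul]

lemma isChar_one : IsChar G 1 := by
  simpa [Pi.one_def] using isChar_trace (Representation.trivial ℂ G ℂ)

lemma cInner_eq_sum [Fintype G] (χ φ : G → ℂ) :
    cInner G χ φ = (Fintype.card G : ℂ)⁻¹ * ∑ g, χ g * conj (φ g) := by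
  rw [cInner, finsum_eq_sum_of_fintype, Nat.card_eq_fintype_card]

lemma isIrrChar_one [Finite G] : IsIrrChar G 1 := by
  have := Fintype.ofFinite G
  refine ⟨isChar_one, ?_⟩
  simp [cInner_eq_sum]

end Characters

namespace SemidirectProduct

variable {N H : Type*} [Group N] [Group H] {φ : H →* MulAut N}

instance [Finite N] [Finite H] : Finite (N ⋊[φ] H) := Finite.of_equiv _ equivProd.symm

lemma sum_eq_sum_sum {M : Type*} [AddCommMonoid M] [Fintype N] [Fintype H] [Fintype (N ⋊[φ] H)]
    (F : N ⋊[φ] H → M) : ∑ s, F s = ∑ n, ∑ h, F ⟨n, h⟩ := by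
  rw [← Fintype.sum_prod_type']
  exact Fintype.sum_equiv equivProd _ _ fun _ => rfl

lemma cInner_comp_rightHom [Finite N] [Finite H] (χ ξ : H → ℂ) :
    cInner (N ⋊[φ] H) (χ ∘ rightHom) (ξ ∘ rightHom) = cInner H χ ξ := by
  have := Fintype.ofFinite N
  have := Fintype.ofFinite H
  have := Fintype.ofFinite (N ⋊[φ] H)
  simp only [cInner_eq_sum, sum_eq_sum_sum, Function.comp_apply, rightHom_eq_right,
    Finset.sum_const, Finset.card_univ, ← Nat.card_eq_fintype_card, card, nsmul_eq_mul,
    Nat.cast_mul]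
  field_simp

lemma isIrrChar_comp_rightHom [Finite N] [Finite H] {χ : H → ℂ} (hχ : IsIrrChar H χ) :
    IsIrrChar (N ⋊[φ] H) (χ ∘ rightHom) :=
  ⟨hχ.1.comp rightHom, (cInner_comp_rightHom χ χ).trans hχ.2⟩

end SemidirectProduct

lemma LinearMap.trace_pi_comp_proj {R ι W : Type*} [CommRing R] [Fintype ι] [DecidableEq ι]
    [AddCommGroup W] [Module R W] [Module.Free R W] [Module.Finite R W]
    (A : ι → W →ₗ[R] W) (π : ι → ι) :
    trace R (ι → W) (LinearMap.pi fun i => A i ∘ₗ (proj (π i) : (ι → W) →ₗ[R] W)) =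
      ∑ i, if π i = i then trace R W (A i) else 0 := by
  have hsum : LinearMap.pi (fun i => A i ∘ₗ (proj (π i) : (ι → W) →ₗ[R] W)) =
      ∑ i, single R (fun _ => W) i ∘ₗ A i ∘ₗ (proj (π i) : (ι → W) →ₗ[R] W) := by
    ext f j
    simp [Finset.sum_apply, Pi.single_apply]
  rw [hsum, map_sum]
  refine Finset.sum_congr rfl fun i _ => ?_
  rw [LinearMap.trace_comp_comm', LinearMap.comp_assoc]
  split_ifs with h
  · rw [h, proj_comp_single_same, comp_id]
  · rw [proj_comp_single_ne R _ _ _ h, comp_zero, map_zero]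

section Fourier

variable (p : ℕ) [NeZero p]

noncomputable def stdChar : Multiplicative (ZMod p) →* ℂ := ZMod.stdAddChar.toMonoidHom

variable {p}

lemma conj_stdChar (a : Multiplicative (ZMod p)) : conj (stdChar p a) = stdChar p a⁻¹ :=
  (ZMod.stdAddChar.map_neg_eq_conj a.toAdd).symm

lemma stdChar_ofAdd_one_ne_one [Fact p.Prime] : stdChar p (Multiplicative.ofAdd 1) ≠ 1 := by
  rw [← (stdChar p).map_one]
  exact ZMod.injective_stdAddChar.ne one_ne_zero

variable [Fact p.Prime] {T : Type*} [Fintype T] [DecidableEq T]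

lemma sum_stdChar_mul_conj (x y : T) :
    ∑ v : T → Multiplicative (ZMod p), stdChar p (v x) * conj (stdChar p (v y)) =
      if x = y then (Fintype.card (T → Multiplicative (ZMod p)) : ℂ) else 0 := by
  let f : (T → Multiplicative (ZMod p)) →* ℂ :=
    (stdChar p).comp
      (Pi.evalMonoidHom (fun _ : T => Multiplicative (ZMod p)) x / Pi.evalMonoidHom _ y)
  have hf : ∀ v, stdChar p (v x) * conj (stdChar p (v y)) = f v := fun v => by
    simp [f, conj_stdChar, div_eq_mul_inv]
  simp only [hf]
  split_ifs with hxy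
  · subst hxy
    simp [f]
  · refine sum_hom_units_eq_zero f fun h => stdChar_ofAdd_one_ne_one (p := p) ?_
    simpa [f, Pi.mulSingle_apply, hxy] using
      DFunLike.congr_fun h (Pi.mulSingle x (Multiplicative.ofAdd 1))

lemma sum_sum_stdChar_mul_conj (c : T → ℂ) (y : T) :
    ∑ v : T → Multiplicative (ZMod p), (∑ x, stdChar p (v x) * c x) * conj (stdChar p (v y)) =
      Fintype.card (T → Multiplicative (ZMod p)) * c y := by
  simp_rw [Finset.sum_mul]
  rw [Finset.sum_comm]
  simp_rw [mul_right_comm _ (c _), ← Finset.sum_mul, sum_stdChar_mul_conj]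
  simp

end Fourier

section Cocycle

variable {P : Type*} [Group P] (Q : Subgroup P)

lemma out_inv_mul_mul_out_mem_iff (g : P) (x : P ⧸ Q) :
    x.out⁻¹ * g * x.out ∈ Q ↔ g⁻¹ • x = x := by
  conv_rhs => rw [← x.out_eq', MulAction.Quotient.smul_mk, QuotientGroup.eq]
  simp [mul_assoc]

lemma out_inv_mul_mul_out_smul_mem (g : P) (x : P ⧸ Q) : x.out⁻¹ * g * (g⁻¹ • x).out ∈ Q := by
  have : ((g * (g⁻¹ • x).out : P) : P ⧸ Q) = (x.out : P ⧸ Q) := by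
    rw [← smul_eq_mul, ← MulAction.Quotient.smul_mk, QuotientGroup.out_eq', smul_inv_smul,
      QuotientGroup.out_eq']
  simpa [mul_assoc] using QuotientGroup.eq.mp this.symm

noncomputable def cocycle (g : P) (x : P ⧸ Q) : Q :=
  ⟨x.out⁻¹ * g * (g⁻¹ • x).out, out_inv_mul_mul_out_smul_mem Q g x⟩

variable {Q}

@[simp] lemma cocycle_one (x : P ⧸ Q) : cocycle Q 1 x = 1 := by
  ext; simp [cocycle]

lemma cocycle_mul (g h : P) (x : P ⧸ Q) :
    cocycle Q (g * h) x = cocycle Q g x * cocycle Q h (g⁻¹ • x) := by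
  ext
  simp only [cocycle, mul_inv_rev, mul_smul, Subgroup.coe_mul]
  group

lemma coe_cocycle_of_smul_eq {g : P} {x : P ⧸ Q} (hx : g⁻¹ • x = x) :
    (cocycle Q g x : P) = x.out⁻¹ * g * x.out := by
  simp [cocycle, hx]

end Cocycle

section Wreath

variable (p : ℕ) {P : Type*} [Group P] (Q : Subgroup P)

abbrev Wreath : Type _ := (P ⧸ Q → Multiplicative (ZMod p)) ⋊[mulAutArrow] P

noncomputable def conjExtend (α : Q → ℂ) (x : P ⧸ Q) (g : P) : ℂ :=
  Function.extend Subtype.val α 0 (x.out⁻¹ * g * x.out)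

/-- The induction `α ↦ α^G` of the header, written through the transversal `out`: the coset `x`
contributes the `x.out`-conjugate of `λ ⊗ α`, with `λ v = stdChar p (v ⟦1⟧)`. -/
noncomputable def wreathInd [NeZero p] [Fintype (P ⧸ Q)] : (Q → ℂ) →ₗ[ℂ] Wreath p Q → ℂ :=
  LinearMap.pi fun s => ∑ x : P ⧸ Q, stdChar p (s.left x) •
    (LinearMap.proj (x.out⁻¹ * s.right * x.out) ∘ₗ
      Function.ExtendByZero.linearMap ℂ (Subtype.val : Q → P))

noncomputable def wreathIndRep [NeZero p] {W : Type*} [AddCommGroup W] [Module ℂ W]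
    (σ : Representation ℂ Q W) : Representation ℂ (Wreath p Q) (P ⧸ Q → W) where
  toFun s := LinearMap.pi fun x =>
    (stdChar p (s.left x) • σ (cocycle Q s.right x)) ∘ₗ LinearMap.proj (s.right⁻¹ • x)
  map_one' := by
    ext f x
    simp
  map_mul' s t := by
    ext f x
    simp [cocycle_mul, mul_smul]
    rfl

variable {p Q}

lemma conjExtend_of_mem (α : Q → ℂ) {x : P ⧸ Q} {g : P} (h : x.out⁻¹ * g * x.out ∈ Q) :
    conjExtend Q α x g = α ⟨_, h⟩ :=
  Subtype.val_injective.extend_apply α 0 ⟨_, h⟩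

lemma conjExtend_of_notMem (α : Q → ℂ) {x : P ⧸ Q} {g : P} (h : x.out⁻¹ * g * x.out ∉ Q) :
    conjExtend Q α x g = 0 :=
  Function.extend_apply' _ _ _ (by simpa using h)

lemma conjExtend_out_mul_mul_out_inv (α : Q → ℂ) (x : P ⧸ Q) (q : Q) :
    conjExtend Q α x (x.out * q * x.out⁻¹) = α q := by
  simp only [conjExtend, mul_assoc, inv_mul_cancel_left, inv_mul_cancel, mul_one]
  exact Subtype.val_injective.extend_apply α 0 q

lemma sum_conjExtend_mul_conj [Fintype P] [Fintype Q] (α β : Q → ℂ) (x : P ⧸ Q) :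
    ∑ g, conjExtend Q α x g * conj (conjExtend Q β x g) = ∑ q, α q * conj (β q) := by
  let F : P → ℂ := fun h =>
    Function.extend Subtype.val α 0 h * conj (Function.extend Subtype.val β 0 h)
  calc ∑ g, conjExtend Q α x g * conj (conjExtend Q β x g)
      = ∑ h, F h :=
        Fintype.sum_equiv (MulAut.conj x.out⁻¹).toEquiv _ _ fun g => by simp [F, conjExtend]
    _ = ∑ q, α q * conj (β q) := by
      refine (Fintype.sum_of_injective Subtype.val Subtype.val_injective _ _ ?_ ?_).symm
      · intro h hh
        simp only [F, Function.extend_apply' _ _ _ hh, Pi.zero_apply, zero_mul]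
      · intro q
        simp only [F, Subtype.val_injective.extend_apply]

variable [NeZero p]

lemma wreathInd_apply [Fintype (P ⧸ Q)] (α : Q → ℂ) (v : P ⧸ Q → Multiplicative (ZMod p))
    (g : P) : wreathInd p Q α ⟨v, g⟩ = ∑ x, stdChar p (v x) * conjExtend Q α x g := by
  simp [wreathInd, conjExtend]

lemma wreathInd_restrict_eq_mul [Fintype (P ⧸ Q)] {ψ : P → ℂ} (hψ : IsChar P ψ)
    (s : Wreath p Q) : wreathInd p Q (fun q => ψ q) s = ψ s.right * wreathInd p Q 1 s := by
  obtain ⟨v, g⟩ := s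
  rw [wreathInd_apply, wreathInd_apply, Finset.mul_sum]
  refine Finset.sum_congr rfl fun x _ => ?_
  by_cases hmem : x.out⁻¹ * g * x.out ∈ Q
  · rw [conjExtend_of_mem _ hmem, conjExtend_of_mem _ hmem, hψ.apply_conj]
    simp [mul_comm]
  · simp [conjExtend_of_notMem _ hmem]

lemma trace_wreathIndRep [Fintype (P ⧸ Q)] {W : Type*} [AddCommGroup W] [Module ℂ W]
    [FiniteDimensional ℂ W] (σ : Representation ℂ Q W) (s : Wreath p Q) :
    LinearMap.trace ℂ (P ⧸ Q → W) (wreathIndRep p Q σ s) =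
      wreathInd p Q (fun q => LinearMap.trace ℂ W (σ q)) s := by
  classical
  obtain ⟨v, g⟩ := s
  rw [wreathIndRep, MonoidHom.coe_mk, OneHom.coe_mk, LinearMap.trace_pi_comp_proj, wreathInd_apply]
  refine Finset.sum_congr rfl fun x _ => ?_
  split_ifs with hx
  · have hmem := (out_inv_mul_mul_out_mem_iff Q g x).mpr hx
    rw [map_smul, smul_eq_mul, conjExtend_of_mem _ hmem]
    congr 3
    exact Subtype.ext (coe_cocycle_of_smul_eq hx)
  · rw [conjExtend_of_notMem _ (mt (out_inv_mul_mul_out_mem_iff Q g x).mp hx), mul_zero]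

lemma IsChar.wreathInd [Fintype (P ⧸ Q)] {α : Q → ℂ} (hα : IsChar Q α) :
    IsChar (Wreath p Q) (wreathInd p Q α) := by
  obtain ⟨n, σ, hσ⟩ := hα
  rw [show α = fun q => LinearMap.trace ℂ _ (σ q) from funext hσ]
  simpa only [trace_wreathIndRep] using isChar_trace (wreathIndRep p Q σ)

end Wreath

section WreathFourier

variable {p : ℕ} [Fact p.Prime] {P : Type*} [Group P] {Q : Subgroup P}

lemma sum_wreathInd_mul_conj [Fintype (P ⧸ Q)] [DecidableEq (P ⧸ Q)] (α : Q → ℂ) (g : P)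
    (y : P ⧸ Q) :
    ∑ v : P ⧸ Q → Multiplicative (ZMod p), wreathInd p Q α ⟨v, g⟩ * conj (stdChar p (v y)) =
      Fintype.card (P ⧸ Q → Multiplicative (ZMod p)) * conjExtend Q α y g := by
  simp only [wreathInd_apply, sum_sum_stdChar_mul_conj]

lemma wreathInd_injective [Fintype (P ⧸ Q)] : Function.Injective (wreathInd p Q) := by
  classical
  intro α β h
  have hcard : (Fintype.card (P ⧸ Q → Multiplicative (ZMod p)) : ℂ) ≠ 0 :=
    Nat.cast_ne_zero.mpr Fintype.card_ne_zero
  have hext : ∀ x g, conjExtend Q α x g = conjExtend Q β x g := fun x g =>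
    mul_left_cancel₀ hcard <| by rw [← sum_wreathInd_mul_conj, ← sum_wreathInd_mul_conj, h]
  funext q
  obtain ⟨x⟩ : Nonempty (P ⧸ Q) := inferInstance
  simpa only [conjExtend_out_mul_mul_out_inv] using hext x (x.out * q * x.out⁻¹)

lemma sum_wreathInd_mul_conj_wreathInd [Fintype (P ⧸ Q)] [DecidableEq (P ⧸ Q)] (α β : Q → ℂ)
    (g : P) :
    ∑ v : P ⧸ Q → Multiplicative (ZMod p),
        wreathInd p Q α ⟨v, g⟩ * conj (wreathInd p Q β ⟨v, g⟩) =
      Fintype.card (P ⧸ Q → Multiplicative (ZMod p)) *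
        ∑ y, conjExtend Q α y g * conj (conjExtend Q β y g) := by
  simp_rw [wreathInd_apply β, map_sum, map_mul, Finset.mul_sum, ← mul_assoc]
  rw [Finset.sum_comm]
  simp_rw [← Finset.sum_mul, sum_wreathInd_mul_conj]

lemma cInner_wreathInd [Finite P] [Fintype (P ⧸ Q)] (α β : Q → ℂ) :
    cInner (Wreath p Q) (wreathInd p Q α) (wreathInd p Q β) = cInner Q α β := by
  classical
  have := Fintype.ofFinite P
  have := Fintype.ofFinite Q
  have := Fintype.ofFinite (Wreath p Q)
  have hcard : Fintype.card (Wreath p Q) = Fintype.card (P ⧸ Q → Multiplicative (ZMod p)) *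
      (Fintype.card (P ⧸ Q) * Fintype.card Q) := by
    simp only [← Nat.card_eq_fintype_card, SemidirectProduct.card,
      ← Subgroup.card_eq_card_quotient_mul_card_subgroup]
  rw [cInner_eq_sum, cInner_eq_sum, SemidirectProduct.sum_eq_sum_sum, Finset.sum_comm]
  simp_rw [sum_wreathInd_mul_conj_wreathInd, ← Finset.mul_sum]
  rw [Finset.sum_comm]
  simp_rw [sum_conjExtend_mul_conj, Finset.sum_const, Finset.card_univ, hcard, nsmul_eq_mul,
    Nat.cast_mul]
  have : (Fintype.card (P ⧸ Q → Multiplicative (ZMod p)) : ℂ) ≠ 0 :=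
    Nat.cast_ne_zero.mpr Fintype.card_ne_zero
  have : (Fintype.card (P ⧸ Q) : ℂ) ≠ 0 := Nat.cast_ne_zero.mpr Fintype.card_ne_zero
  field_simp

lemma isIrrChar_wreathInd [Finite P] [Fintype (P ⧸ Q)] {α : Q → ℂ} (hα : IsIrrChar Q α) :
    IsIrrChar (Wreath p Q) (wreathInd p Q α) :=
  ⟨hα.1.wreathInd, (cInner_wreathInd α α).trans hα.2⟩

lemma IsPGroup.wreath [Finite P] (hP : IsPGroup p P) : IsPGroup p (Wreath p Q) := by
  obtain ⟨m, hm⟩ := IsPGroup.iff_card.mp hP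
  refine IsPGroup.of_card (n := Nat.card (P ⧸ Q) + m) ?_
  simp [SemidirectProduct.card, Nat.card_fun, hm, pow_add]

end WreathFourier

theorem restriction_decomposition_to_product_decomposition_general
    (p : ℕ) (hp : p.Prime)
    (P : Type) [Group P] [Finite P] (hP : IsPGroup p P)
    (Q : Subgroup P)
    (ψ : P → ℂ) (hψ : IsIrrChar P ψ)
    (k : ℕ)
    (φ : Fin k → (↥Q → ℂ)) (hφirr : ∀ i, IsIrrChar ↥Q (φ i))
    (hφinj : Function.Injective φ)
    (n : Fin k → ℕ)
    (hres : ∀ x : ↥Q, ψ (x : P) = ∑ i : Fin k, (n i : ℂ) * φ i x)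
    (hmult : ∀ i : Fin k, cInner ↥Q (fun x : ↥Q => ψ (x : P)) (φ i) = (n i : ℂ)) :
    ∃ (G : Type) (_ : Group G) (_ : Finite G), IsPGroup p G ∧
      ∃ (Ψ Θ : G → ℂ) (Φ : Fin k → (G → ℂ)),
        IsIrrChar G Ψ ∧ IsIrrChar G Θ ∧
        (∀ i, IsIrrChar G (Φ i)) ∧ Function.Injective Φ ∧
        (∀ g : G, Ψ g * Θ g = ∑ i : Fin k, (n i : ℂ) * Φ i g) ∧
        (∀ i : Fin k, cInner G (fun g => Ψ g * Θ g) (Φ i) = (n i : ℂ)) := by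
  classical
  have := Fact.mk hp
  have := Fintype.ofFinite P
  have hrestrict : (fun q : Q => ψ q) = ∑ i, (n i : ℂ) • φ i := by
    ext q
    simp [hres]
  have hprod (s : Wreath p Q) :
      ψ s.right * wreathInd p Q 1 s = ∑ i, (n i : ℂ) * wreathInd p Q (φ i) s := by
    simp [← wreathInd_restrict_eq_mul hψ.1, hrestrict]
  refine ⟨Wreath p Q, inferInstance, inferInstance, hP.wreath, fun s => ψ s.right,
    wreathInd p Q 1, fun i => wreathInd p Q (φ i), SemidirectProduct.isIrrChar_comp_rightHom hψ,
    isIrrChar_wreathInd isIrrChar_one, fun i => isIrrChar_wreathInd (hφirr i),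
    wreathInd_injective.comp hφinj, hprod, fun i => ?_⟩
  simp_rw [← wreathInd_restrict_eq_mul hψ.1, cInner_wreathInd]
  exact hmult i

/-- **Theorem B.**  Let `P` be a finite `p`-group, `Q < P` a proper subgroup
and `ψ ∈ Irr(P)`.  If the restriction `ψ_Q` decomposes as
`ψ_Q = ∑ i, n i • φ i` with the `φ i` pairwise distinct irreducible characters
of `Q` and `n i = (ψ_Q, φ i) > 0`, then there is a finite `p`-group `G` with
irreducible characters `Ψ, Θ` such that `Ψ Θ = ∑ i, n i • Φ i` with the `Φ i`
pairwise distinct irreducible characters of `G` and `n i = (Ψ Θ, Φ i) > 0`. -/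
theorem restriction_decomposition_to_product_decomposition
    (p : ℕ) (hp : p.Prime)
    (P : Type) [Group P] [Finite P] (hP : IsPGroup p P)
    (Q : Subgroup P) (hQ : Q < ⊤)
    (ψ : P → ℂ) (hψ : IsIrrChar P ψ)
    (k : ℕ) (hk : 0 < k)
    (φ : Fin k → (↥Q → ℂ)) (hφirr : ∀ i, IsIrrChar ↥Q (φ i))
    (hφinj : Function.Injective φ)
    (n : Fin k → ℕ) (hn : ∀ i, 0 < n i)
    (hres : ∀ x : ↥Q, ψ (x : P) = ∑ i : Fin k, (n i : ℂ) * φ i x)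
    (hmult : ∀ i : Fin k, cInner ↥Q (fun x : ↥Q => ψ (x : P)) (φ i) = (n i : ℂ)) :
    ∃ (G : Type) (_ : Group G) (_ : Finite G), IsPGroup p G ∧
      ∃ (Ψ Θ : G → ℂ) (Φ : Fin k → (G → ℂ)),
        IsIrrChar G Ψ ∧ IsIrrChar G Θ ∧
        (∀ i, IsIrrChar G (Φ i)) ∧ Function.Injective Φ ∧
        (∀ g : G, Ψ g * Θ g = ∑ i : Fin k, (n i : ℂ) * Φ i g) ∧
        (∀ i : Fin k, cInner G (fun g => Ψ g * Θ g) (Φ i) = (n i : ℂ)) :=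
  restriction_decomposition_to_product_decomposition_general p hp P hP Q ψ hψ k φ hφirr hφinj n hres
    hmult
end

section
/- Given any finite p-group P and any subgroup Q of P, there exist a finite elementary abelian p-group E, an action of P on E by group automorphisms, and a linear character λ of E such that the stabilizer of λ in P (under the induced action of P on the linear characters of E) is exactly Q. -/
/-!
Take for `E` the permutation module `(ZMod p)^(P ⧸ Q)`, written multiplicatively, and for `λ`
evaluation at the coset `Q` followed by a faithful character of `ZMod p`. Since functions into a
nontrivial group separate points, `σ` fixes `λ` exactly when it fixes the coset `Q`, i.e. when
`σ ∈ Q`.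
-/

open MulAction

theorem Function.forall_apply_eq_apply_iff {X M : Type*} [Nontrivial M] (x y : X) :
    (∀ f : X → M, f y = f x) ↔ y = x := by
  classical
  refine ⟨fun h => ?_, fun h f => h ▸ rfl⟩
  obtain ⟨a, b, hab⟩ := exists_pair_ne M
  by_contra hyx
  have := h fun z => if z = x then a else b
  simp only [hyx, if_false, if_true] at this
  exact hab this.symm

theorem MonoidHom.comp_evalMonoidHom_mulAutArrow_inv_iff {G X M N : Type*} [Group G]
    [MulAction G X] [Monoid M] [Nontrivial M] [Monoid N] {χ : M →* N}
    (hχ : Function.Injective χ) (x : X) (σ : G) :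
    (∀ f : X → M, (χ.comp (Pi.evalMonoidHom _ x)) ((mulAutArrow σ)⁻¹ f) =
      χ.comp (Pi.evalMonoidHom _ x) f) ↔ σ ∈ stabilizer G x := by
  have inv_apply (f : X → M) : (mulAutArrow σ)⁻¹ f x = f (σ • x) :=
    congrArg (fun g : G => f (g • x)) (inv_inv σ)
  simp only [MonoidHom.coe_comp, Function.comp_apply, Pi.evalMonoidHom_apply, inv_apply,
    hχ.eq_iff, mem_stabilizer_iff]
  exact Function.forall_apply_eq_apply_iff x (σ • x)

theorem ZMod.pi_multiplicative_pow_eq_one {X : Type*} (n : ℕ) (f : X → Multiplicative (ZMod n)) :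
    f ^ n = 1 := by
  funext x
  exact congrArg Multiplicative.ofAdd ((nsmul_eq_mul _ _).trans (by simp))

theorem exists_elementary_abelian_with_stabilizer_general
    (p : ℕ) (hp : p.Prime)
    (P : Type) [Group P] [Finite P] (Q : Subgroup P) :
    ∃ (E : Type) (_ : CommGroup E) (_ : Finite E),
      IsPGroup p E ∧ (∀ x : E, x ^ p = 1) ∧
      ∃ (φ : P →* MulAut E) (lam : E →* ℂ),
        ∀ σ : P, (∀ τ : E, lam ((φ σ)⁻¹ τ) = lam τ) ↔ σ ∈ Q := by
  have := Fact.mk hp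
  have hψ : Function.Injective (ZMod.stdAddChar (N := p)).toMonoidHom :=
    ZMod.injective_stdAddChar.comp Multiplicative.toAdd.injective
  refine ⟨P ⧸ Q → Multiplicative (ZMod p), inferInstance, inferInstance,
    fun f => ⟨1, (pow_one p).symm ▸ ZMod.pi_multiplicative_pow_eq_one p f⟩,
    ZMod.pi_multiplicative_pow_eq_one p, mulAutArrow,
    ZMod.stdAddChar.toMonoidHom.comp (Pi.evalMonoidHom _ ((1 : P) : P ⧸ Q)), fun σ => ?_⟩
  rw [MonoidHom.comp_evalMonoidHom_mulAutArrow_inv_iff hψ, stabilizer_quotient]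

/-- **Lemma.**  Given any finite `p`-group `P` and any subgroup `Q ≤ P`, there
exist a finite elementary abelian `p`-group `E`, an action `φ` of `P` on `E`
by automorphisms, and a linear character `lam ∈ Lin(E)` whose stabilizer in
`P` (for the action `(σ · lam) τ = lam ((φ σ)⁻¹ τ)` of `P` on `Lin(E)`) is
exactly `Q`. -/
theorem exists_elementary_abelian_with_stabilizer
    (p : ℕ) (hp : p.Prime)
    (P : Type) [Group P] [Finite P] (hP : IsPGroup p P) (Q : Subgroup P) :
    ∃ (E : Type) (_ : CommGroup E) (_ : Finite E),
      IsPGroup p E ∧ (∀ x : E, x ^ p = 1) ∧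
      ∃ (φ : P →* MulAut E) (lam : E →* ℂ),
        ∀ σ : P, (∀ τ : E, lam ((φ σ)⁻¹ τ) = lam τ) ↔ σ ∈ Q :=
  exists_elementary_abelian_with_stabilizer_general p hp P Q
end

section
/- Fix a prime number p. Let k > 0 be an integer and let n_1, ..., n_{k-1} be positive integers. Choose an integer r > 0 with p^r > n_1 + ... + n_{k-1}, and set n_k = p^r − (n_1 + ... + n_{k-1}). Then there exist a finite p-group P, a subgroup Q ≤ P, and an irreducible character ψ ∈ Irr(P) such that the restriction ψ_Q decomposes as ψ_Q = Σ_{i=1}^{k} n_i φ_i, where φ_1, ..., φ_k are pairwise distinct irreducible characters of Q and n_i = (ψ_Q, φ_i) for each i; in particular, ψ_Q has exactly k distinct irreducible constituents with the prescribed multiplicities n_1, ..., n_k. -/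
/-!
Take `q = p ^ r` and `P = (C_q × C_q) ≀ C_q`. For linear characters `λ_τ` (`τ ∈ C_q`) of
`C_q × C_q`, let `ψ` be the character of `P` induced from the linear character
`f ↦ ∏ x, λ_x (f x)` of the base group. If `τ ↦ λ_τ` is injective, the `q` conjugates of that
linear character are pairwise distinct, so orthogonality of linear characters of the base gives
`⟨ψ, ψ⟩ = 1`. On the subgroup `Q ≅ C_q` of base elements supported at `1` with values in
`C_q × 1`, `ψ` restricts to `∑ τ, λ_τ|_Q`. Taking `λ_τ (a, b) = ζ ^ (c τ * a + τ * b)`, the second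
coordinate keeps the `λ_τ` distinct while `λ_τ|_Q = ζ ^ (c τ * ·)` depends only on the label
`c τ`; labelling `C_q` by `k` distinct labels with fibres of sizes `n_1, …, n_k` gives the
prescribed decomposition, and the multiplicities are inner products because distinct linear
characters of `Q` are orthonormal.
-/

open Finset

section LinearCharacters

variable {G : Type*} [Group G]

lemma IsChar.of_representation {W : Type*} [AddCommGroup W] [Module ℂ W] [FiniteDimensional ℂ W]
    (ρ : Representation ℂ G W) : IsChar G fun g => LinearMap.trace ℂ W (ρ g) := by
  let e := (Module.finBasis ℂ W).equivFun
  exact ⟨_, (e.conjAlgEquiv ℂ).toMonoidHom.comp ρ, fun g => (LinearMap.trace_conj' (ρ g) e).symm⟩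

lemma MonoidHom.isChar (χ : G →* ℂ) : IsChar G χ := by
  simpa [Module.algebraMap_end_eq_smul_id] using
    IsChar.of_representation ((algebraMap ℂ (Module.End ℂ ℂ)).toMonoidHom.comp χ)

lemma MonoidHom.mul_apply_inv (χ : G →* ℂ) (g : G) : χ g * χ g⁻¹ = 1 := by
  rw [← map_mul, mul_inv_cancel, map_one]

variable [Finite G]

lemma MonoidHom.conj_apply_eq_apply_inv (χ : G →* ℂ) (g : G) :
    starRingEnd ℂ (χ g) = χ g⁻¹ := by
  have hnorm : ‖χ g‖ = 1 := Complex.norm_eq_one_of_pow_eq_one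
    (by rw [← map_pow, pow_card_eq_one', map_one]) Nat.card_pos.ne'
  have hconj : χ g * starRingEnd ℂ (χ g) = 1 := by
    rw [Complex.mul_conj', hnorm]; norm_num
  exact mul_left_cancel₀ (left_ne_zero_of_mul_eq_one hconj) (hconj.trans (χ.mul_apply_inv g).symm)

lemma MonoidHom.sum_mul_conj [Fintype G] (χ φ : G →* ℂ) [Decidable (χ = φ)] :
    ∑ g, χ g * starRingEnd ℂ (φ g) = if χ = φ then (Fintype.card G : ℂ) else 0 := by
  let ξ : G →* ℂ :=
    { toFun := fun g => χ g * φ g⁻¹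
      map_one' := by simp
      map_mul' := fun g h => by simp only [map_mul, mul_inv_rev]; ring }
  simp_rw [MonoidHom.conj_apply_eq_apply_inv]
  split_ifs with h
  · simp only [h, MonoidHom.mul_apply_inv, sum_const, card_univ, nsmul_eq_mul, mul_one]
  · refine sum_hom_units_eq_zero ξ fun hξ => h (MonoidHom.ext fun g => ?_)
    exact mul_right_cancel₀ (right_ne_zero_of_mul_eq_one (φ.mul_apply_inv g))
      ((DFunLike.congr_fun hξ g).trans (φ.mul_apply_inv g).symm)

lemma MonoidHom.cInner_eq (χ φ : G →* ℂ) [Decidable (χ = φ)] :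
    cInner G χ φ = if χ = φ then 1 else 0 := by
  have := Fintype.ofFinite G
  rw [cInner, finsum_eq_sum_of_fintype, MonoidHom.sum_mul_conj, Nat.card_eq_fintype_card]
  split_ifs <;> simp

lemma MonoidHom.isIrrChar (χ : G →* ℂ) : IsIrrChar G χ := by
  classical
  exact ⟨χ.isChar, by simpa using χ.cInner_eq χ⟩

lemma cInner_sum_mul_monoidHom {ι : Type*} [Fintype ι] {χ : ι → G →* ℂ}
    (hχ : Function.Injective χ) (c : ι → ℂ) (i : ι) :
    cInner G (fun g => ∑ j, c j * χ j g) (χ i) = c i := by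
  classical
  have := Fintype.ofFinite G
  have hcard : (Fintype.card G : ℂ) ≠ 0 := Nat.cast_ne_zero.mpr Fintype.card_ne_zero
  simp_rw [cInner, finsum_eq_sum_of_fintype, sum_mul, mul_assoc]
  rw [sum_comm]
  simp_rw [← mul_sum, MonoidHom.sum_mul_conj, hχ.eq_iff, mul_ite, mul_zero, sum_ite_eq',
    mem_univ, if_true, Nat.card_eq_fintype_card]
  field_simp

end LinearCharacters


namespace RegularWreathProduct

variable {D H : Type*} [Group D] [Group H]

def base : (H → D) →* D ≀ᵣ H where
  toFun f := ⟨f, 1⟩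
  map_one' := rfl
  map_mul' f g := by ext <;> simp

@[simp] lemma left_base (f : H → D) : (base f).left = f := rfl
@[simp] lemma right_base (f : H → D) : (base f).right = 1 := rfl

lemma base_injective : Function.Injective (base : (H → D) →* D ≀ᵣ H) :=
  fun _ _ h => congrArg left h

variable [Fintype H] (χ : H → D →* ℂ)

def baseChar (j : H) : (H → D) →* ℂ :=
  ∏ x, (χ (j⁻¹ * x)).comp (Pi.evalMonoidHom (fun _ => D) x)

lemma baseChar_apply (j : H) (f : H → D) : baseChar χ j f = ∏ x, χ (j⁻¹ * x) (f x) := by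
  simp [baseChar]

lemma baseChar_mulSingle [DecidableEq H] (j x : H) (d : D) :
    baseChar χ j (Pi.mulSingle x d) = χ (j⁻¹ * x) d := by
  rw [baseChar_apply, Fintype.prod_eq_single x fun y hy => by simp [hy], Pi.mulSingle_eq_same]

lemma baseChar_comp_mul_left (j s : H) (f : H → D) :
    baseChar χ j (fun x => f (s⁻¹ * x)) = baseChar χ (s⁻¹ * j) f := by
  simp only [baseChar_apply]
  exact Fintype.prod_equiv (Equiv.mulLeft s⁻¹) _ _ fun x => by simp [mul_assoc]

lemma baseChar_injective (hχ : Function.Injective χ) : Function.Injective (baseChar χ) := by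
  classical
  intro j j' h
  have hχj : χ 1 = χ (j'⁻¹ * j) := MonoidHom.ext fun d => by
    simpa [baseChar_mulSingle] using DFunLike.congr_fun h (Pi.mulSingle j d)
  exact (inv_mul_eq_one.mp (hχ hχj).symm).symm

def monomialRep : Representation ℂ (D ≀ᵣ H) (H → ℂ) where
  toFun g :=
    { toFun v j := baseChar χ j g.left * v (g.right⁻¹ * j)
      map_add' v w := by ext j; simp [mul_add]
      map_smul' c v := by ext j; simp only [Pi.smul_apply, smul_eq_mul, RingHom.id_apply]; ring }
  map_one' := by ext v j; simp
  map_mul' a b := by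
    ext v j
    simp [baseChar_comp_mul_left, mul_assoc]

variable [DecidableEq H]

def monomialChar (g : D ≀ᵣ H) : ℂ :=
  if g.right = 1 then ∑ j, baseChar χ j g.left else 0

lemma trace_monomialRep (g : D ≀ᵣ H) :
    LinearMap.trace ℂ (H → ℂ) (monomialRep χ g) = monomialChar χ g := by
  rw [LinearMap.trace_eq_matrix_trace ℂ (Pi.basisFun ℂ H), Matrix.trace, monomialChar]
  simp only [Matrix.diag_apply, LinearMap.toMatrix_apply, Pi.basisFun_apply, Pi.basisFun_repr]
  simp [monomialRep, Pi.single_apply]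

lemma isChar_monomialChar : IsChar (D ≀ᵣ H) (monomialChar χ) := by
  simpa only [trace_monomialRep] using IsChar.of_representation (monomialRep χ)

lemma cInner_monomialChar_self [Finite D] (hχ : Function.Injective χ) :
    cInner (D ≀ᵣ H) (monomialChar χ) (monomialChar χ) = 1 := by
  have := Fintype.ofFinite D
  have := Fintype.ofFinite (D ≀ᵣ H)
  have hsum : ∑ g : D ≀ᵣ H, monomialChar χ g * starRingEnd ℂ (monomialChar χ g) =
      ∑ f : H → D, ∑ j, ∑ j', baseChar χ j f * starRingEnd ℂ (baseChar χ j' f) := by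
    rw [← (equivProd D H).symm.sum_comp, Fintype.sum_prod_type]
    refine sum_congr rfl fun f _ => ?_
    change ∑ s, monomialChar χ ⟨f, s⟩ * starRingEnd ℂ (monomialChar χ ⟨f, s⟩) = _
    simp [monomialChar, sum_mul_sum]
  have horth : ∀ j j', ∑ f : H → D, baseChar χ j f * starRingEnd ℂ (baseChar χ j' f) =
      if j = j' then (Fintype.card (H → D) : ℂ) else 0 := fun j j' => by
    simp_rw [MonoidHom.sum_mul_conj, (baseChar_injective χ hχ).eq_iff]
  have hcard : (Nat.card (D ≀ᵣ H) : ℂ) = Fintype.card (H → D) * Fintype.card H := by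
    rw [card, Fintype.card_fun, Nat.card_eq_fintype_card, Nat.card_eq_fintype_card]
    push_cast; rfl
  rw [cInner, finsum_eq_sum_of_fintype, hsum, sum_comm]
  simp_rw [sum_comm (γ := H → D), horth, sum_ite_eq, mem_univ, if_true, sum_const, card_univ,
    nsmul_eq_mul, hcard]
  field_simp

lemma isIrrChar_monomialChar [Finite D] (hχ : Function.Injective χ) :
    IsIrrChar (D ≀ᵣ H) (monomialChar χ) :=
  ⟨isChar_monomialChar χ, cInner_monomialChar_self χ hχ⟩

lemma monomialChar_base_mulSingle_one (d : D) :
    monomialChar χ (base (Pi.mulSingle 1 d)) = ∑ j, χ j d := by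
  simp only [monomialChar, right_base, left_base, if_true, baseChar_mulSingle, mul_one]
  exact Equiv.sum_comp (Equiv.inv H) fun j => χ j d

end RegularWreathProduct

lemma Fintype.sum_sigma_fst_equiv {ι T M : Type*} [Fintype ι] [Fintype T] [AddCommMonoid M]
    (m : ι → ℕ) (E : (Σ i, Fin (m i)) ≃ T) (F : ι → M) :
    ∑ t, F (E.symm t).1 = ∑ i, m i • F i := by
  rw [E.symm.sum_comp (fun s => F s.1), ← univ_sigma_univ, Finset.sum_sigma]
  simp

section Construction

open RegularWreathProduct ZMod

variable (q : ℕ)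

abbrev WreathGroup : Type :=
  (Multiplicative (ZMod q) × Multiplicative (ZMod q)) ≀ᵣ Multiplicative (ZMod q)

def cyclicEmbedding : Multiplicative (ZMod q) →* WreathGroup q :=
  base.comp ((MonoidHom.mulSingle _ 1).comp (MonoidHom.inl _ _))

lemma cyclicEmbedding_injective : Function.Injective (cyclicEmbedding q) :=
  base_injective.comp ((Pi.mulSingle_injective 1).comp (Prod.mk_left_injective 1))

variable [NeZero q]

lemma isPGroup_wreathGroup {p r : ℕ} (hq : q = p ^ r) : IsPGroup p (WreathGroup q) := by
  refine IsPGroup.of_card (n := r * (2 * q + 1)) ?_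
  rw [RegularWreathProduct.card, Nat.card_prod]
  simp only [Nat.card_eq_fintype_card, Fintype.card_multiplicative, ZMod.card, pow_mul, ← hq]
  ring

noncomputable def labelChar (c : Multiplicative (ZMod q) → ZMod q) (τ : Multiplicative (ZMod q)) :
    Multiplicative (ZMod q) × Multiplicative (ZMod q) →* ℂ :=
  (stdAddChar.mulShift (c τ)).toMonoidHom.coprod (stdAddChar.mulShift τ.toAdd).toMonoidHom

lemma labelChar_injective (c : Multiplicative (ZMod q) → ZMod q) :
    Function.Injective (labelChar q c) := by
  intro τ τ' h
  have := DFunLike.congr_fun h (1, Multiplicative.ofAdd 1)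
  simpa [labelChar, injective_stdAddChar.eq_iff] using this

lemma monomialChar_cyclicEmbedding (c : Multiplicative (ZMod q) → ZMod q)
    (a : Multiplicative (ZMod q)) :
    monomialChar (labelChar q c) (cyclicEmbedding q a) = ∑ τ, stdAddChar (c τ * a.toAdd) := by
  rw [cyclicEmbedding, MonoidHom.comp_apply, MonoidHom.comp_apply, MonoidHom.mulSingle_apply,
    monomialChar_base_mulSingle_one]
  simp only [labelChar, MonoidHom.inl_apply, MonoidHom.coprod_apply, AddChar.toMonoidHom_apply,
    AddChar.mulShift_apply, toAdd_one, AddChar.map_zero_eq_one, mul_one]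

theorem exists_subgroup_restriction_eq_sum_mul {k : ℕ} (m : Fin k → ℕ) (hm : ∀ i, 0 < m i)
    (hsum : ∑ i, m i = q) :
    ∃ (Q : Subgroup (WreathGroup q)) (ψ : WreathGroup q → ℂ) (φ : Fin k → Q →* ℂ),
      IsIrrChar _ ψ ∧ Function.Injective φ ∧ ∀ x : Q, ψ x = ∑ i, (m i : ℂ) * φ i x := by
  classical
  have hcard : Fintype.card (Σ i, Fin (m i)) = Fintype.card (Multiplicative (ZMod q)) := by
    simp [hsum]
  let E := Fintype.equivOfCardEq hcard
  have hk : Fintype.card (Fin k) ≤ Fintype.card (ZMod q) := by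
    simpa [← hsum] using Finset.card_nsmul_le_sum univ m 1 fun i _ => hm i
  let ℓ : Fin k ↪ ZMod q := (Function.Embedding.nonempty_of_card_le hk).some
  let e := MonoidHom.ofInjective (cyclicEmbedding_injective q)
  refine ⟨(cyclicEmbedding q).range, monomialChar (labelChar q fun τ => ℓ (E.symm τ).1),
    fun i => (stdAddChar.mulShift (ℓ i)).toMonoidHom.comp e.symm.toMonoidHom,
    isIrrChar_monomialChar _ (labelChar_injective q _), fun i j h => ?_, fun x => ?_⟩
  · have := DFunLike.congr_fun h (e (Multiplicative.ofAdd 1))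
    simpa [injective_stdAddChar.eq_iff] using this
  · obtain ⟨a, rfl⟩ := e.surjective x
    rw [MonoidHom.ofInjective_apply, monomialChar_cyclicEmbedding,
      Fintype.sum_sigma_fst_equiv m E fun i => stdAddChar (ℓ i * a.toAdd)]
    simp [nsmul_eq_mul]

end Construction

lemma pos_and_sum_eq_of_last_eq_sub {k N : ℕ} (hk : 0 < k) (n : Fin (k - 1) → ℕ)
    (hn : ∀ i, 0 < n i) (hlt : ∑ i, n i < N) (m : Fin k → ℕ)
    (hm : ∀ (i : Fin k) (h : (i : ℕ) < k - 1), m i = n ⟨i, h⟩)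
    (hmk : m ⟨k - 1, Nat.sub_lt hk Nat.one_pos⟩ = N - ∑ i, n i) :
    (∀ i, 0 < m i) ∧ ∑ i, m i = N := by
  obtain ⟨k, rfl⟩ : ∃ k', k = k' + 1 := ⟨k - 1, by omega⟩
  have hcast (i : Fin k) : m i.castSucc = n i := hm i.castSucc i.isLt
  have hlast : m (Fin.last k) = N - ∑ i, n i := hmk
  refine ⟨Fin.lastCases (by omega) fun i => hcast i ▸ hn i, ?_⟩
  rw [Fin.sum_univ_castSucc, hlast]
  simp only [hcast]
  exact Nat.add_sub_of_le hlt.le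

theorem restriction_with_prescribed_constituents_general
    (p : ℕ) (k : ℕ) (hk : 0 < k)
    (n : Fin (k - 1) → ℕ) (hn : ∀ i, 0 < n i)
    (r : ℕ) (hlt : ∑ i, n i < p ^ r)
    (m : Fin k → ℕ)
    (hm : ∀ (i : Fin k) (h : (i : ℕ) < k - 1), m i = n ⟨i, h⟩)
    (hmk : m ⟨k - 1, Nat.sub_lt hk Nat.one_pos⟩ = p ^ r - ∑ i, n i) :
    ∃ (P : Type) (_ : Group P) (_ : Finite P), IsPGroup p P ∧
      ∃ (Q : Subgroup P) (ψ : P → ℂ) (φ : Fin k → (↥Q → ℂ)),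
        IsIrrChar P ψ ∧
        (∀ i, IsIrrChar ↥Q (φ i)) ∧ Function.Injective φ ∧
        (∀ x : ↥Q, ψ (x : P) = ∑ i : Fin k, (m i : ℂ) * φ i x) ∧
        (∀ i : Fin k,
          cInner ↥Q (fun x : ↥Q => ψ (x : P)) (φ i) = (m i : ℂ)) := by
  obtain ⟨hpos, hsum⟩ := pos_and_sum_eq_of_last_eq_sub hk n hn hlt m hm hmk
  have : NeZero (p ^ r) := ⟨by omega⟩
  obtain ⟨Q, ψ, φ, hψ, hφ, hres⟩ := exists_subgroup_restriction_eq_sum_mul (p ^ r) m hpos hsum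
  refine ⟨WreathGroup (p ^ r), inferInstance, inferInstance, isPGroup_wreathGroup _ rfl, Q, ψ,
    fun i => φ i, hψ, fun i => (φ i).isIrrChar, DFunLike.coe_injective.comp hφ, hres, fun i => ?_⟩
  rw [show (fun x : Q => ψ x) = fun x => ∑ j, (m j : ℂ) * φ j x from funext hres]
  exact cInner_sum_mul_monoidHom hφ _ i

/-- Fix a prime `p`.  Let `k > 0` and let `n 0, …, n (k-2)` (the
multiplicities `n_1, …, n_{k-1}`) be positive integers.  Choose `r > 0` with
`p ^ r > n_1 + ⋯ + n_{k-1}` and let `m : Fin k → ℕ` be the full list of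
multiplicities, i.e. `m i = n i` for `i < k - 1` and the last one is
`n_k = p ^ r - (n_1 + ⋯ + n_{k-1})`.  Then there are a finite `p`-group `P`,
a subgroup `Q ≤ P` and `ψ ∈ Irr(P)` such that `ψ_Q = ∑ i, m i • φ i` for
pairwise distinct irreducible characters `φ i` of `Q`, with
`m i = (ψ_Q, φ i)`; in particular `ψ_Q` has exactly `k` distinct irreducible
constituents with the prescribed multiplicities. -/
theorem restriction_with_prescribed_constituents
    (p : ℕ) (hp : p.Prime) (k : ℕ) (hk : 0 < k)
    (n : Fin (k - 1) → ℕ) (hn : ∀ i, 0 < n i)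
    (r : ℕ) (hr : 0 < r) (hlt : ∑ i, n i < p ^ r)
    (m : Fin k → ℕ)
    (hm : ∀ (i : Fin k) (h : (i : ℕ) < k - 1), m i = n ⟨i, h⟩)
    (hmk : m ⟨k - 1, Nat.sub_lt hk Nat.one_pos⟩ = p ^ r - ∑ i, n i) :
    ∃ (P : Type) (_ : Group P) (_ : Finite P), IsPGroup p P ∧
      ∃ (Q : Subgroup P) (ψ : P → ℂ) (φ : Fin k → (↥Q → ℂ)),
        IsIrrChar P ψ ∧
        (∀ i, IsIrrChar ↥Q (φ i)) ∧ Function.Injective φ ∧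
        (∀ x : ↥Q, ψ (x : P) = ∑ i : Fin k, (m i : ℂ) * φ i x) ∧
        (∀ i : Fin k,
          cInner ↥Q (fun x : ↥Q => ψ (x : P)) (φ i) = (m i : ℂ)) :=
  restriction_with_prescribed_constituents_general p k hk n hn r hlt m hm hmk
end
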